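/- Let u, v ∈ (ℝ_{≥0})^N be non-zero non-negative vectors satisfying (‖u‖₁/‖u‖_∞)(‖v‖₁/‖v‖_∞) ≥ CN with C ≥ 1. For K ≤ N/2, let (Q,R) be a uniformly random ordered pair of disjoint K-element subsets of [N]. Then for 0 < γ < 1: Pr[∑_{i∈Q}∑_{j∈R} u_i v_j ≥ e^γ (K²/N²)‖u‖₁‖v‖₁] ≤ 2·exp(−γ²CK/(8N)). -/

import Mathlib

open scoped Classical

/-- The ℓ¹ norm of a vector. -/
noncomputable def nl1 {N : ℕ} (u : Fin N → ℝ) : ℝ := ∑ i, |u i|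

/-- The ℓ∞ norm of a vector. -/
noncomputable def nlinf {N : ℕ} (u : Fin N → ℝ) : ℝ := ⨆ i, |u i|

/-!
Since `∑ i ∈ Q, ∑ j ∈ R, u i * v j = (∑ i ∈ Q, u i) * (∑ j ∈ R, v j)`, the event forces one of
the two factors to exceed `e^(γ/2)` times its mean `(K/N) ‖·‖₁`, so a union bound reduces the
theorem to an upper tail bound for the sum of a nonnegative vector over a uniformly random
`K`-subset. That is a Chernoff bound: after scaling the vector `y` into `[0,1]^N`,
`∑_{|Q| = K} exp (θ ∑_{i ∈ Q} y i)` is the elementary symmetric polynomial `e_K (exp (θ y))`,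
which Maclaurin's inequality bounds by `C(N,K)` times the `K`-th power of the mean of
`exp (θ y i) ≤ 1 + (e^θ - 1) y i`, just as for sampling with replacement. Taking `θ = γ/2` and
using `θ e^θ - e^θ + 1 ≥ θ²/2` gives `exp (-γ² K ‖u‖₁ / (8 N ‖u‖∞))`, and
`‖u‖₁ / ‖u‖∞ ≥ C` because the other ratio is at most `N`.
-/

open Finset

theorem le_or_le_of_mul_le_mul_of_nonneg {R : Type*} [Semiring R] [LinearOrder R]
    [IsStrictOrderedRing R] {a b c d : R} (ha : 0 ≤ a) (hb : 0 ≤ b) (h : c * d ≤ a * b) :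
    c ≤ a ∨ d ≤ b := by
  by_contra! h'
  exact (mul_lt_mul'' h'.1 h'.2 ha hb).not_ge h

theorem pow_mul_tangent_le_pow_succ {A X : ℝ} (hA : 0 ≤ A) (hX : 0 ≤ X) (k : ℕ) :
    A ^ k * ((k + 1) * X - k * A) ≤ X ^ (k + 1) := by
  have h := pow_add_mul_le_add_pow (a := A) (b := X - A) hA (by linarith) (k + 1)
  rw [add_sub_cancel] at h
  calc A ^ k * ((k + 1) * X - k * A) = A ^ (k + 1) + (k + 1 : ℕ) * A ^ (k + 1 - 1) * (X - A) := by
        push_cast; ring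
    _ ≤ X ^ (k + 1) := h

theorem maclaurin_step {n k : ℕ} {S x E₀ E₁ : ℝ} (hn : 0 < n) (hS : 0 ≤ S) (hx : 0 ≤ x)
    (h₁ : (n : ℝ) ^ (k + 1) * E₁ ≤ n.choose (k + 1) * S ^ (k + 1))
    (h₀ : (n : ℝ) ^ k * E₀ ≤ n.choose k * S ^ k) :
    ((n + 1 : ℕ) : ℝ) ^ (k + 1) * (E₁ + x * E₀) ≤ (n + 1).choose (k + 1) * (x + S) ^ (k + 1) := by
  have hpascal : ((n + 1).choose (k + 1) : ℝ) = n.choose k + n.choose (k + 1) := by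
    exact_mod_cast Nat.choose_succ_succ' n k
  have habsorb : ((n : ℝ) + 1) * n.choose k = (n + 1).choose (k + 1) * (k + 1) := by
    exact_mod_cast Nat.add_one_mul_choose_eq n k
  refine le_of_mul_le_mul_left ?_ (by positivity : (0 : ℝ) < (n : ℝ) ^ (k + 1))
  calc (n : ℝ) ^ (k + 1) * (((n + 1 : ℕ) : ℝ) ^ (k + 1) * (E₁ + x * E₀))
      = ((n : ℝ) + 1) ^ (k + 1) * ((n : ℝ) ^ (k + 1) * E₁ + x * n * ((n : ℝ) ^ k * E₀)) := by
        push_cast; ring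
    _ ≤ ((n : ℝ) + 1) ^ (k + 1) *
          (n.choose (k + 1) * S ^ (k + 1) + x * n * (n.choose k * S ^ k)) := by
        gcongr
    _ = (n + 1).choose (k + 1) *
          ((n + 1) ^ k * S ^ k * ((k + 1) * (n * (x + S)) - k * ((n + 1) * S))) := by
        linear_combination
          ((n + 1 : ℝ) ^ k * S ^ k * n * (x + S) - (n + 1 : ℝ) ^ (k + 1) * S ^ (k + 1)) * habsorb
            - (n + 1 : ℝ) ^ (k + 1) * S ^ (k + 1) * hpascal
    _ ≤ (n + 1).choose (k + 1) * (n * (x + S)) ^ (k + 1) := by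
        -- the tangent line of `t ↦ t ^ (k + 1)` at `(n + 1) * S` lies below it at `n * (x + S)`
        rw [← mul_pow]
        gcongr
        exact pow_mul_tangent_le_pow_succ (by positivity) (by positivity) k
    _ = (n : ℝ) ^ (k + 1) * ((n + 1).choose (k + 1) * (x + S) ^ (k + 1)) := by
        rw [mul_pow]; ring

theorem Multiset.esymm_cons_succ {R : Type*} [CommSemiring R] (a : R) (s : Multiset R) (k : ℕ) :
    (a ::ₘ s).esymm (k + 1) = s.esymm (k + 1) + a * s.esymm k := by
  simp [Multiset.esymm, Multiset.powersetCard_cons, Multiset.sum_map_mul_left]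

theorem Multiset.card_pow_mul_esymm_le {s : Multiset ℝ} (hs : ∀ x ∈ s, 0 ≤ x) (K : ℕ) :
    (Multiset.card s : ℝ) ^ K * s.esymm K ≤ (Multiset.card s).choose K * s.sum ^ K := by
  induction s using Multiset.induction_on generalizing K with
  | empty => cases K <;> simp [Multiset.esymm]
  | cons a s ih =>
    have ha : 0 ≤ a := hs a (Multiset.mem_cons_self a s)
    have hs' : ∀ x ∈ s, 0 ≤ x := fun x hx => hs x (Multiset.mem_cons_of_mem hx)
    cases K with
    | zero => simp [Multiset.esymm]
    | succ k =>
      rw [Multiset.esymm_cons_succ, Multiset.card_cons, Multiset.sum_cons]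
      rcases (Multiset.card s).eq_zero_or_pos with hcard | hpos
      · obtain rfl := Multiset.card_eq_zero.mp hcard
        cases k <;> simp [Multiset.esymm, Multiset.powersetCard_zero_right]; positivity
      · exact maclaurin_step hpos (Multiset.sum_nonneg hs') ha (ih hs' (k + 1)) (ih hs' k)

theorem Real.exp_mul_le_one_add_mul {θ y : ℝ} (hy0 : 0 ≤ y) (hy1 : y ≤ 1) :
    Real.exp (θ * y) ≤ 1 + (Real.exp θ - 1) * y := by
  have h := convexOn_exp.2 (Set.mem_univ 0) (Set.mem_univ θ) (sub_nonneg.2 hy1) hy0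
    (sub_add_cancel 1 y)
  simp only [smul_eq_mul, mul_zero, zero_add, Real.exp_zero, mul_one] at h
  rw [mul_comm θ y]
  linarith

theorem Real.sq_div_two_le_mul_exp_sub_exp_add_one {θ : ℝ} (hθ : 0 ≤ θ) :
    θ ^ 2 / 2 ≤ θ * Real.exp θ - Real.exp θ + 1 := by
  let g : ℝ → ℝ := fun t => t * Real.exp t - Real.exp t + 1 - t ^ 2 / 2
  have hg : ∀ t, HasDerivAt g (t * (Real.exp t - 1)) t := by
    intro t
    refine (((((hasDerivAt_id' t).mul (Real.hasDerivAt_exp t)).sub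
      (Real.hasDerivAt_exp t)).add_const 1).sub ((hasDerivAt_pow 2 t).div_const 2)).congr_deriv ?_
    norm_num
    ring
  have hmono : Monotone g := monotone_of_deriv_nonneg (fun t => (hg t).differentiableAt) fun t => by
    rw [(hg t).deriv]
    rcases le_total 0 t with ht | ht
    · exact mul_nonneg ht (sub_nonneg.2 (Real.one_le_exp ht))
    · exact mul_nonneg_of_nonpos_of_nonpos ht (sub_nonpos.2 (Real.exp_le_one_iff.2 ht))
  have h := hmono hθ
  norm_num [g] at h
  linarith

section Sampling

variable {ι : Type*} [Fintype ι]

theorem sum_powersetCard_exp_sum_le [Nonempty ι] {y : ι → ℝ} (hy0 : ∀ i, 0 ≤ y i)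
    (hy1 : ∀ i, y i ≤ 1) (θ : ℝ) (K : ℕ) :
    ∑ Q ∈ powersetCard K univ, Real.exp (θ * ∑ i ∈ Q, y i) ≤
      (Fintype.card ι).choose K *
        Real.exp ((Real.exp θ - 1) * K * (∑ i, y i) / Fintype.card ι) := by
  set n := Fintype.card ι
  set c := (Real.exp θ - 1) * (∑ i, y i) / n
  have hn : (0 : ℝ) < n := by exact_mod_cast Fintype.card_pos
  have hesymm : ∑ Q ∈ powersetCard K univ, Real.exp (θ * ∑ i ∈ Q, y i) =
      (univ.val.map fun i => Real.exp (θ * y i)).esymm K := by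
    rw [Finset.esymm_map_val]
    refine sum_congr rfl fun Q _ => ?_
    rw [mul_sum, Real.exp_sum]
  have hmean : ∑ i, Real.exp (θ * y i) ≤ n * Real.exp c :=
    calc ∑ i, Real.exp (θ * y i) ≤ ∑ i, (1 + (Real.exp θ - 1) * y i) :=
          sum_le_sum fun i _ => Real.exp_mul_le_one_add_mul (hy0 i) (hy1 i)
      _ = n * (1 + c) := by
          rw [sum_add_distrib, ← mul_sum, sum_const, card_univ, nsmul_one]
          simp only [c, n]
          field_simp
      _ ≤ n * Real.exp c := by gcongr; linarith [Real.add_one_le_exp c]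
  have hmac := Multiset.card_pow_mul_esymm_le (s := univ.val.map fun i => Real.exp (θ * y i))
    (by simp [Real.exp_nonneg]) K
  simp only [Multiset.card_map, card_val, card_univ, sum_map_val] at hmac
  rw [hesymm]
  refine le_of_mul_le_mul_left ?_ (pow_pos hn K)
  calc (n : ℝ) ^ K * _ ≤ n.choose K * (∑ i, Real.exp (θ * y i)) ^ K := hmac
    _ ≤ n.choose K * (n * Real.exp c) ^ K := by gcongr
    _ = _ := by
      rw [mul_pow, ← Real.exp_nat_mul]
      simp only [c]
      ring_nf

theorem card_filter_exp_mul_le_sum_le [Nonempty ι] {y : ι → ℝ} (hy0 : ∀ i, 0 ≤ y i)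
    (hy1 : ∀ i, y i ≤ 1) {θ : ℝ} (hθ : 0 ≤ θ) (K : ℕ) :
    (#{Q ∈ powersetCard K univ |
        Real.exp θ * (K / Fintype.card ι) * ∑ i, y i ≤ ∑ i ∈ Q, y i} : ℝ) ≤
      (Fintype.card ι).choose K * Real.exp (-(θ ^ 2 * K * ∑ i, y i) / (2 * Fintype.card ι)) := by
  set n := Fintype.card ι
  set S := ∑ i, y i
  set t := Real.exp θ * (K / n) * S
  have hn : (0 : ℝ) < n := by exact_mod_cast Fintype.card_pos
  have hS : 0 ≤ S := sum_nonneg fun i _ => hy0 i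
  have hmarkov : (#{Q ∈ powersetCard K univ | t ≤ ∑ i ∈ Q, y i} : ℝ) * Real.exp (θ * t) ≤
      n.choose K * Real.exp ((Real.exp θ - 1) * K * S / n) :=
    calc _ ≤ ∑ Q ∈ powersetCard K univ with t ≤ ∑ i ∈ Q, y i, Real.exp (θ * ∑ i ∈ Q, y i) := by
          rw [← nsmul_eq_mul]
          exact card_nsmul_le_sum _ _ _ fun Q hQ =>
            Real.exp_le_exp.2 (mul_le_mul_of_nonneg_left (mem_filter.1 hQ).2 hθ)
      _ ≤ ∑ Q ∈ powersetCard K univ, Real.exp (θ * ∑ i ∈ Q, y i) :=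
          sum_le_sum_of_subset_of_nonneg (filter_subset _ _) fun _ _ _ => (Real.exp_pos _).le
      _ ≤ _ := sum_powersetCard_exp_sum_le hy0 hy1 θ K
  have hexponent : (Real.exp θ - 1) * K * S / n - θ * t ≤ -(θ ^ 2 * K * S) / (2 * n) := by
    have h := mul_le_mul_of_nonneg_left (Real.sq_div_two_le_mul_exp_sub_exp_add_one hθ)
      (by positivity : (0 : ℝ) ≤ K * S / n)
    simp only [t]
    field_simp
    field_simp at h
    linarith
  calc _ ≤ n.choose K * Real.exp ((Real.exp θ - 1) * K * S / n - θ * t) := by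
        rw [Real.exp_sub, ← mul_div_assoc, le_div_iff₀ (Real.exp_pos _)]
        exact hmarkov
    _ ≤ _ := by gcongr

end Sampling

section DisjointPairs

variable (α : Type*) [Fintype α] [DecidableEq α]

def disjointPairs (K : ℕ) : Finset (Finset α × Finset α) :=
  {p ∈ powersetCard K univ ×ˢ powersetCard K univ | Disjoint p.1 p.2}

variable {α}

theorem card_filter_disjoint_powersetCard {K : ℕ} {Q : Finset α} (hQ : #Q = K) :
    #{R ∈ powersetCard K (univ : Finset α) | Disjoint Q R} = (Fintype.card α - K).choose K := by
  have : {R ∈ powersetCard K (univ : Finset α) | Disjoint Q R} = powersetCard K (univ \ Q) := by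
    ext R
    simp [mem_powersetCard, subset_sdiff, disjoint_comm, and_comm]
  rw [this, card_powersetCard, card_sdiff_of_subset (subset_univ Q), card_univ, hQ]

theorem card_disjointPairs_filter_fst_mem {K : ℕ} {T : Finset (Finset α)}
    (hT : T ⊆ powersetCard K univ) :
    #{p ∈ disjointPairs α K | p.1 ∈ T} = #T * (Fintype.card α - K).choose K := by
  calc #{p ∈ disjointPairs α K | p.1 ∈ T}
      = ∑ Q ∈ powersetCard K univ, ∑ R ∈ powersetCard K univ,
          if Disjoint Q R ∧ Q ∈ T then 1 else 0 := by
        rw [disjointPairs, filter_filter, card_filter, sum_product]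
    _ = ∑ Q ∈ powersetCard K univ, if Q ∈ T then (Fintype.card α - K).choose K else 0 := by
        refine sum_congr rfl fun Q hQ => ?_
        rw [← card_filter_disjoint_powersetCard (mem_powersetCard.1 hQ).2, card_filter]
        split_ifs with hQT <;> simp [hQT]
    _ = _ := by
        rw [← sum_filter, sum_const, smul_eq_mul, filter_mem_eq_inter, inter_eq_right.2 hT]

theorem card_disjointPairs_filter_snd_mem {K : ℕ} {T : Finset (Finset α)}
    (hT : T ⊆ powersetCard K univ) :
    #{p ∈ disjointPairs α K | p.2 ∈ T} = #T * (Fintype.card α - K).choose K := by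
  rw [← card_disjointPairs_filter_fst_mem hT]
  refine card_equiv (Equiv.prodComm _ _) fun p => ?_
  simp [disjointPairs, disjoint_comm, and_comm]

theorem card_disjointPairs (K : ℕ) :
    #(disjointPairs α K) = (Fintype.card α).choose K * (Fintype.card α - K).choose K := by
  have hfst : ∀ p ∈ disjointPairs α K, p.1 ∈ powersetCard K univ :=
    fun p hp => (mem_product.1 (mem_filter.1 hp).1).1
  have h := card_disjointPairs_filter_fst_mem (subset_refl (powersetCard K (univ : Finset α)))
  rwa [filter_true_of_mem hfst, card_powersetCard, card_univ] at h

theorem card_filter_fst_mem_union_filter_snd_mem_le {K : ℕ} {T T' : Finset (Finset α)}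
    (hT : T ⊆ powersetCard K univ) (hT' : T' ⊆ powersetCard K univ) {ε : ℝ}
    (hTε : (#T : ℝ) ≤ (Fintype.card α).choose K * ε)
    (hT'ε : (#T' : ℝ) ≤ (Fintype.card α).choose K * ε) :
    (#({p ∈ disjointPairs α K | p.1 ∈ T} ∪ {p ∈ disjointPairs α K | p.2 ∈ T'}) : ℝ) ≤
      2 * ε * #(disjointPairs α K) := by
  calc _ ≤ (#{p ∈ disjointPairs α K | p.1 ∈ T} + #{p ∈ disjointPairs α K | p.2 ∈ T'} : ℝ) := by
        exact_mod_cast card_union_le _ _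
    _ = (#T + #T' : ℝ) * (Fintype.card α - K).choose K := by
        rw [card_disjointPairs_filter_fst_mem hT, card_disjointPairs_filter_snd_mem hT']
        push_cast
        ring
    _ ≤ ((Fintype.card α).choose K * ε + (Fintype.card α).choose K * ε) *
          (Fintype.card α - K).choose K := by gcongr
    _ = 2 * ε * #(disjointPairs α K) := by
        rw [card_disjointPairs]
        push_cast
        ring

end DisjointPairs

section Vectors

variable {N : ℕ} {u : Fin N → ℝ}

theorem abs_le_nlinf (u : Fin N → ℝ) (i : Fin N) : |u i| ≤ nlinf u :=
  le_ciSup (f := fun i => |u i|) (Set.finite_range _).bddAbove i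

theorem nlinf_pos (hu0 : u ≠ 0) : 0 < nlinf u := by
  obtain ⟨i, hi⟩ := Function.ne_iff.1 hu0
  exact (abs_pos.2 hi).trans_le (abs_le_nlinf u i)

theorem nl1_le_mul_nlinf (u : Fin N → ℝ) : nl1 u ≤ N * nlinf u := by
  simpa [nl1] using sum_le_sum fun i (_ : i ∈ univ) => abs_le_nlinf u i

theorem nlinf_nonneg (u : Fin N → ℝ) : 0 ≤ nlinf u :=
  Real.iSup_nonneg fun _ => abs_nonneg _

theorem nl1_div_nlinf_nonneg (u : Fin N → ℝ) : 0 ≤ nl1 u / nlinf u :=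
  div_nonneg (sum_nonneg fun _ _ => abs_nonneg _) (nlinf_nonneg u)

theorem nl1_div_nlinf_le (u : Fin N → ℝ) : nl1 u / nlinf u ≤ N :=
  div_le_of_le_mul₀ (nlinf_nonneg u) N.cast_nonneg (nl1_le_mul_nlinf u)

theorem le_nl1_div_nlinf_of_mul_le {v : Fin N → ℝ} {C : ℝ} (hu0 : u ≠ 0)
    (h : C * N ≤ (nl1 u / nlinf u) * (nl1 v / nlinf v)) : C ≤ nl1 u / nlinf u := by
  have hN : (0 : ℝ) < N := by
    exact_mod_cast Fin.pos_iff_nonempty.2 ⟨(Function.ne_iff.1 hu0).choose⟩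
  exact le_of_mul_le_mul_right
    (h.trans (mul_le_mul_of_nonneg_left (nl1_div_nlinf_le v) (nl1_div_nlinf_nonneg u))) hN

theorem nl1_eq_sum (hu : ∀ i, 0 ≤ u i) : nl1 u = ∑ i, u i :=
  sum_congr rfl fun i _ => abs_of_nonneg (hu i)

noncomputable def heavySubsets (θ : ℝ) (K : ℕ) (u : Fin N → ℝ) : Finset (Finset (Fin N)) :=
  {Q ∈ powersetCard K univ | Real.exp θ * (K / N) * nl1 u ≤ ∑ i ∈ Q, u i}

theorem heavySubsets_subset {θ : ℝ} {K : ℕ} : heavySubsets θ K u ⊆ powersetCard K univ :=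
  filter_subset _ _

theorem card_heavySubsets_le (hu : ∀ i, 0 ≤ u i) (hu0 : u ≠ 0) {C θ : ℝ}
    (hθ : 0 ≤ θ) (hC : C ≤ nl1 u / nlinf u) (K : ℕ) :
    (#(heavySubsets θ K u) : ℝ) ≤
      N.choose K * Real.exp (-(θ ^ 2 * K * C) / (2 * N)) := by
  have hM := nlinf_pos hu0
  have : Nonempty (Fin N) := ⟨(Function.ne_iff.1 hu0).choose⟩
  have h := card_filter_exp_mul_le_sum_le (y := fun i => u i / nlinf u)
    (fun i => div_nonneg (hu i) hM.le)
    (fun i => div_le_one_of_le₀ ((le_abs_self _).trans (abs_le_nlinf u i)) hM.le) hθ K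
  simp only [Fintype.card_fin, ← sum_div, ← nl1_eq_sum hu] at h
  calc _ = (#{Q ∈ powersetCard K univ |
        Real.exp θ * (K / N) * (nl1 u / nlinf u) ≤ (∑ i ∈ Q, u i) / nlinf u} : ℝ) := by
        unfold heavySubsets
        congr 3
        ext Q
        rw [← div_le_div_iff_of_pos_right hM, mul_div_assoc]
    _ ≤ _ := h
    _ ≤ _ := by gcongr

theorem filter_le_sum_mul_sum_subset {v : Fin N → ℝ} (hu : ∀ i, 0 ≤ u i) (hv : ∀ i, 0 ≤ v i)
    (γ : ℝ) (K : ℕ) :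
    {p ∈ disjointPairs (Fin N) K |
        Real.exp γ * ((K : ℝ) ^ 2 / (N : ℝ) ^ 2 * (nl1 u * nl1 v)) ≤
          ∑ i ∈ p.1, ∑ j ∈ p.2, u i * v j} ⊆
      {p ∈ disjointPairs (Fin N) K | p.1 ∈ heavySubsets (γ / 2) K u} ∪
        {p ∈ disjointPairs (Fin N) K | p.2 ∈ heavySubsets (γ / 2) K v} := by
  intro p hp
  simp only [mem_union, mem_filter, ← sum_mul_sum] at hp ⊢
  have hsplit : Real.exp γ * ((K : ℝ) ^ 2 / (N : ℝ) ^ 2 * (nl1 u * nl1 v)) =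
      (Real.exp (γ / 2) * (K / N) * nl1 u) * (Real.exp (γ / 2) * (K / N) * nl1 v) := by
    rw [show Real.exp γ = Real.exp (γ / 2) * Real.exp (γ / 2) by rw [← Real.exp_add, add_halves]]
    ring
  obtain ⟨hQ, hR⟩ := mem_product.1 (mem_filter.1 hp.1).1
  rcases le_or_le_of_mul_le_mul_of_nonneg (sum_nonneg fun i _ => hu i)
    (sum_nonneg fun j _ => hv j) (hsplit ▸ hp.2) with h | h
  exacts [Or.inl ⟨hp.1, mem_filter.2 ⟨hQ, h⟩⟩, Or.inr ⟨hp.1, mem_filter.2 ⟨hR, h⟩⟩]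

end Vectors

theorem stmt11_general (N K : ℕ) (C γ : ℝ) (hγ0 : 0 < γ)
    (u v : Fin N → ℝ) (hu : ∀ i, 0 ≤ u i) (hv : ∀ i, 0 ≤ v i)
    (hu0 : u ≠ 0) (hv0 : v ≠ 0)
    (hratio : C * N ≤ (nl1 u / nlinf u) * (nl1 v / nlinf v)) :
    let Pairs : Finset (Finset (Fin N) × Finset (Fin N)) :=
      ((Finset.powersetCard K Finset.univ) ×ˢ (Finset.powersetCard K Finset.univ)).filter
        (fun p => Disjoint p.1 p.2)
    ((Pairs.filter (fun p =>
          Real.exp γ * ((K : ℝ) ^ 2 / (N : ℝ) ^ 2 * (nl1 u * nl1 v)) ≤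
            ∑ i ∈ p.1, ∑ j ∈ p.2, u i * v j)).card : ℝ) / (Pairs.card : ℝ) ≤
      2 * Real.exp (-(γ ^ 2 * C * K) / (8 * N)) := by
  intro Pairs
  change (#{p ∈ disjointPairs (Fin N) K | _} : ℝ) / #(disjointPairs (Fin N) K) ≤ _
  have hθ : 0 ≤ γ / 2 := by positivity
  have hε : Real.exp (-((γ / 2) ^ 2 * K * C) / (2 * N)) =
      Real.exp (-(γ ^ 2 * C * K) / (8 * N)) := by
    ring_nf
  have htail_u := hε ▸ card_heavySubsets_le hu hu0 hθ (le_nl1_div_nlinf_of_mul_le hu0 hratio) K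
  have htail_v := hε ▸ card_heavySubsets_le hv hv0 hθ
    (le_nl1_div_nlinf_of_mul_le hv0 (hratio.trans_eq (mul_comm _ _))) K
  refine div_le_of_le_mul₀ (Nat.cast_nonneg _) (by positivity) ?_
  calc _ ≤ (#({p ∈ disjointPairs (Fin N) K | p.1 ∈ heavySubsets (γ / 2) K u} ∪
        {p ∈ disjointPairs (Fin N) K | p.2 ∈ heavySubsets (γ / 2) K v}) : ℝ) := by
        exact_mod_cast card_le_card (filter_le_sum_mul_sum_subset hu hv γ K)
    _ ≤ _ := card_filter_fst_mem_union_filter_snd_mem_le heavySubsets_subset heavySubsets_subset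
        (by rwa [Fintype.card_fin]) (by rwa [Fintype.card_fin])

theorem stmt11 (N K : ℕ) (C γ : ℝ) (hC : 1 ≤ C) (hγ0 : 0 < γ) (hγ1 : γ < 1)
    (hK : 2 * K ≤ N)
    (u v : Fin N → ℝ) (hu : ∀ i, 0 ≤ u i) (hv : ∀ i, 0 ≤ v i)
    (hu0 : u ≠ 0) (hv0 : v ≠ 0)
    (hratio : C * N ≤ (nl1 u / nlinf u) * (nl1 v / nlinf v)) :
    let Pairs : Finset (Finset (Fin N) × Finset (Fin N)) :=
      ((Finset.powersetCard K Finset.univ) ×ˢ (Finset.powersetCard K Finset.univ)).filter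
        (fun p => Disjoint p.1 p.2)
    ((Pairs.filter (fun p =>
          Real.exp γ * ((K : ℝ) ^ 2 / (N : ℝ) ^ 2 * (nl1 u * nl1 v)) ≤
            ∑ i ∈ p.1, ∑ j ∈ p.2, u i * v j)).card : ℝ) / (Pairs.card : ℝ) ≤
      2 * Real.exp (-(γ ^ 2 * C * K) / (8 * N)) :=
  stmt11_general N K C γ hγ0 u v hu hv hu0 hv0 hratio
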